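/- Let Φ be a 2L×L complex matrix of full rank L satisfying Φ* I Φ = 0, where I = (0, -1; 1, 0) in L×L blocks. Write (a; b) = 2^{-1/2} (1, -i·1; 1, i·1) Φ. Then a and b are invertible and U := a b⁻¹ is a unitary L×L matrix. -/

import Mathlib

/-!
The Cayley matrix turns the blocks `Φ = (P; Q)` into `a = (P - iQ)/√2` and `b = (P + iQ)/√2`,
so `aᴴa` and `bᴴb` are `½(ΦᴴΦ ± i Φᴴℐ Φ)`. For a Lagrangian frame both equal `½ ΦᴴΦ`, which is
invertible because `Φ` has full column rank. Hence `a` and `b` are invertible, and `aᴴa = bᴴb`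
says exactly that `a b⁻¹` is unitary.
-/

open Matrix

variable {L : ℕ}

/-- The matrix `ℐ = (0,-1;1,0)` in `L×L` blocks. -/
def Iop (L : ℕ) : Matrix (Fin L ⊕ Fin L) (Fin L ⊕ Fin L) ℂ :=
  Matrix.fromBlocks 0 (-1) 1 0

/-- The Cayley matrix `2^{-1/2} (1, -i·1; 1, i·1)`. -/
noncomputable def cayley (L : ℕ) : Matrix (Fin L ⊕ Fin L) (Fin L ⊕ Fin L) ℂ :=
  ((Real.sqrt 2 : ℂ))⁻¹ •
    Matrix.fromBlocks 1 ((-Complex.I) • (1 : Matrix (Fin L) (Fin L) ℂ)) 1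
      (Complex.I • (1 : Matrix (Fin L) (Fin L) ℂ))

/-- The upper block `a` of `2^{-1/2}(1,-i1;1,i1)Φ`. -/
noncomputable def aMat (Φ : Matrix (Fin L ⊕ Fin L) (Fin L) ℂ) : Matrix (Fin L) (Fin L) ℂ :=
  (cayley L * Φ).submatrix Sum.inl id

/-- The lower block `b` of `2^{-1/2}(1,-i1;1,i1)Φ`. -/
noncomputable def bMat (Φ : Matrix (Fin L ⊕ Fin L) (Fin L) ℂ) : Matrix (Fin L) (Fin L) ℂ :=
  (cayley L * Φ).submatrix Sum.inr id

open Complex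

namespace Matrix

lemma isUnit_of_rank_eq_card {K n : Type*} [Field K] [Fintype n] [DecidableEq n]
    {A : Matrix n n K} (h : A.rank = Fintype.card n) : IsUnit A := by
  rw [← mulVec_injective_iff_isUnit]
  refine LinearMap.injective_iff_surjective.mpr (LinearMap.range_eq_top (f := A.mulVecLin).mp ?_)
  refine Submodule.eq_top_of_finrank_eq ?_
  rw [Module.finrank_fintype_fun_eq_card, ← h, rank]

lemma isUnit_conjTranspose_mul_self_of_rank_eq_card {R m n : Type*} [Field R] [PartialOrder R]
    [StarRing R] [StarOrderedRing R] [Fintype m] [Fintype n] [DecidableEq n] {A : Matrix m n R}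
    (h : A.rank = Fintype.card n) : IsUnit (Aᴴ * A) :=
  isUnit_of_rank_eq_card (by rw [rank_conjTranspose_mul_self, h])

lemma isUnit_of_isUnit_conjTranspose_mul_self {R n : Type*} [CommRing R] [StarRing R]
    [Fintype n] [DecidableEq n] {A : Matrix n n R} (h : IsUnit (Aᴴ * A)) : IsUnit A := by
  rw [isUnit_iff_isUnit_det] at h ⊢
  rw [det_mul] at h
  exact isUnit_of_mul_isUnit_right h

lemma mul_inv_mem_unitaryGroup_of_conjTranspose_mul_self_eq {R n : Type*} [CommRing R]
    [StarRing R] [Fintype n] [DecidableEq n] {A B : Matrix n n R} (hB : IsUnit B)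
    (h : Aᴴ * A = Bᴴ * B) : A * B⁻¹ ∈ unitaryGroup n R := by
  have hBdet : IsUnit B.det := (isUnit_iff_isUnit_det B).mp hB
  have hBHdet : IsUnit Bᴴ.det := by rwa [det_conjTranspose, isUnit_star]
  rw [mem_unitaryGroup_iff', star_eq_conjTranspose, conjTranspose_mul, conjTranspose_nonsing_inv,
    Matrix.mul_assoc, ← Matrix.mul_assoc Aᴴ, h, ← Matrix.mul_assoc, ← Matrix.mul_assoc,
    nonsing_inv_mul _ hBHdet, Matrix.one_mul, mul_nonsing_inv _ hBdet]

lemma conjTranspose_fromRows_mul_self {R m₁ m₂ n : Type*} [Semiring R] [StarRing R]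
    [Fintype m₁] [Fintype m₂] (P : Matrix m₁ n R) (Q : Matrix m₂ n R) :
    (fromRows P Q)ᴴ * fromRows P Q = Pᴴ * P + Qᴴ * Q := by
  rw [conjTranspose_fromRows_eq_fromCols_conjTranspose, fromCols_mul_fromRows]

lemma conjTranspose_sub_I_smul_mul_self {m n : Type*} [Fintype m] (P Q : Matrix m n ℂ) :
    (P - I • Q)ᴴ * (P - I • Q) = Pᴴ * P + Qᴴ * Q + I • (Qᴴ * P - Pᴴ * Q) := by
  simp only [conjTranspose_sub, conjTranspose_smul, star_def, conj_I, Matrix.sub_mul,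
    Matrix.mul_sub, Matrix.smul_mul, Matrix.mul_smul]
  linear_combination (norm := module) I_sq • (-(Qᴴ * Q) : Matrix n n ℂ)

lemma conjTranspose_add_I_smul_mul_self {m n : Type*} [Fintype m] (P Q : Matrix m n ℂ) :
    (P + I • Q)ᴴ * (P + I • Q) = Pᴴ * P + Qᴴ * Q - I • (Qᴴ * P - Pᴴ * Q) := by
  simp only [conjTranspose_add, conjTranspose_smul, star_def, conj_I, Matrix.add_mul,
    Matrix.mul_add, Matrix.smul_mul, Matrix.mul_smul]
  linear_combination (norm := module) I_sq • (-(Qᴴ * Q) : Matrix n n ℂ)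

end Matrix

lemma star_inv_sqrt_two_mul_self : star ((Real.sqrt 2 : ℂ)⁻¹) * (Real.sqrt 2 : ℂ)⁻¹ = 2⁻¹ := by
  rw [star_def, map_inv₀, conj_ofReal, ← mul_inv, ← ofReal_mul, Real.mul_self_sqrt zero_le_two]
  norm_num

lemma conjTranspose_fromRows_mul_Iop_mul {n : Type*} (P Q : Matrix (Fin L) n ℂ) :
    (fromRows P Q)ᴴ * Iop L * fromRows P Q = Qᴴ * P - Pᴴ * Q := by
  rw [conjTranspose_fromRows_eq_fromCols_conjTranspose, Iop, Matrix.mul_assoc,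
    fromBlocks_mul_fromRows, fromCols_mul_fromRows]
  simp [sub_eq_add_neg, add_comm]

lemma aMat_eq (Φ : Matrix (Fin L ⊕ Fin L) (Fin L) ℂ) :
    aMat Φ = (Real.sqrt 2 : ℂ)⁻¹ • (Φ.toRows₁ - I • Φ.toRows₂) := by
  rw [aMat, cayley, ← fromRows_toRows Φ, Matrix.smul_mul, fromBlocks_mul_fromRows]
  ext i j
  simp [sub_eq_add_neg]

lemma bMat_eq (Φ : Matrix (Fin L ⊕ Fin L) (Fin L) ℂ) :
    bMat Φ = (Real.sqrt 2 : ℂ)⁻¹ • (Φ.toRows₁ + I • Φ.toRows₂) := by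
  rw [bMat, cayley, ← fromRows_toRows Φ, Matrix.smul_mul, fromBlocks_mul_fromRows]
  ext i j
  simp

lemma conjTranspose_aMat_mul_aMat (Φ : Matrix (Fin L ⊕ Fin L) (Fin L) ℂ) :
    (aMat Φ)ᴴ * aMat Φ = (2 : ℂ)⁻¹ • (Φᴴ * Φ + I • (Φᴴ * Iop L * Φ)) := by
  conv_rhs => rw [← fromRows_toRows Φ, conjTranspose_fromRows_mul_self,
    conjTranspose_fromRows_mul_Iop_mul]
  rw [aMat_eq, conjTranspose_smul, Matrix.smul_mul, Matrix.mul_smul, smul_smul,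
    star_inv_sqrt_two_mul_self, conjTranspose_sub_I_smul_mul_self]

lemma conjTranspose_bMat_mul_bMat (Φ : Matrix (Fin L ⊕ Fin L) (Fin L) ℂ) :
    (bMat Φ)ᴴ * bMat Φ = (2 : ℂ)⁻¹ • (Φᴴ * Φ - I • (Φᴴ * Iop L * Φ)) := by
  conv_rhs => rw [← fromRows_toRows Φ, conjTranspose_fromRows_mul_self,
    conjTranspose_fromRows_mul_Iop_mul]
  rw [bMat_eq, conjTranspose_smul, Matrix.smul_mul, Matrix.mul_smul, smul_smul,
    star_inv_sqrt_two_mul_self, conjTranspose_add_I_smul_mul_self]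

/-- if `Φ` is a `2L×L` matrix of full rank `L` with `Φ* ℐ Φ = 0` (an
`ℐ`-Lagrangian frame), then with `(a; b) = 2^{-1/2}(1,-i1;1,i1)Φ`, the matrices `a` and `b`
are invertible and `U = a b⁻¹` is unitary. -/
theorem stereographic_projection_unitary
    (Φ : Matrix (Fin L ⊕ Fin L) (Fin L) ℂ)
    (hrank : Φ.rank = L) (hiso : Φᴴ * Iop L * Φ = 0) :
    IsUnit (aMat Φ) ∧ IsUnit (bMat Φ)
    ∧ aMat Φ * (bMat Φ)⁻¹ ∈ Matrix.unitaryGroup (Fin L) ℂ := by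
  have hΦ : IsUnit ((2 : ℂ)⁻¹ • (Φᴴ * Φ)) := by
    open ComplexOrder in
    exact (isUnit_conjTranspose_mul_self_of_rank_eq_card (by rw [hrank, Fintype.card_fin])).smul
      (Units.mk0 _ (by norm_num : (2 : ℂ)⁻¹ ≠ 0))
  have ha : (aMat Φ)ᴴ * aMat Φ = (2 : ℂ)⁻¹ • (Φᴴ * Φ) := by
    rw [conjTranspose_aMat_mul_aMat, hiso, smul_zero, add_zero]
  have hb : (bMat Φ)ᴴ * bMat Φ = (2 : ℂ)⁻¹ • (Φᴴ * Φ) := by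
    rw [conjTranspose_bMat_mul_bMat, hiso, smul_zero, sub_zero]
  have hbUnit : IsUnit (bMat Φ) := isUnit_of_isUnit_conjTranspose_mul_self (hb ▸ hΦ)
  exact ⟨isUnit_of_isUnit_conjTranspose_mul_self (ha ▸ hΦ), hbUnit,
    mul_inv_mem_unitaryGroup_of_conjTranspose_mul_self_eq hbUnit (ha.trans hb.symm)⟩
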